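/- If a MAC function is modeled as a free binary symbol (no equations), then the adversary can deduce mac(m, k) from a set S if and only if either mac(m, k) is a subterm-accessible member of S-derivable pairs, or both m and k are deducible from S. -/
import Mathlib


inductive Term where
  | atom : ℕ → Term
  | pair : Term → Term → Term
  | mac : Term → Term → Term

inductive Deduce (S : Set Term) : Term → Prop where
  | mem {t : Term} : t ∈ S → Deduce S t
  | pair {t₁ t₂ : Term} : Deduce S t₁ → Deduce S t₂ → Deduce S (Term.pair t₁ t₂)
  | fst {t₁ t₂ : Term} : Deduce S (Term.pair t₁ t₂) → Deduce S t₁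
  | snd {t₁ t₂ : Term} : Deduce S (Term.pair t₁ t₂) → Deduce S t₂
  | mac {m k : Term} : Deduce S m → Deduce S k → Deduce S (Term.mac m k)

/-- Subterm-accessibility: terms reachable from members of `S` using only
projections. -/
inductive Acc' (S : Set Term) : Term → Prop where
  | mem {t : Term} : t ∈ S → Acc' S t
  | fst {t₁ t₂ : Term} : Acc' S (Term.pair t₁ t₂) → Acc' S t₁
  | snd {t₁ t₂ : Term} : Acc' S (Term.pair t₁ t₂) → Acc' S t₂

inductive Syn (S : Set Term) : Term → Prop where
  | acc {t : Term} : Acc' S t → Syn S t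
  | pair {a b : Term} : Syn S a → Syn S b → Syn S (Term.pair a b)
  | mac {m k : Term} : Deduce S m → Deduce S k → Syn S (Term.mac m k)

lemma acc_deduce {S : Set Term} {t : Term} (h : Acc' S t) : Deduce S t := by
  induction h with
  | mem h => exact Deduce.mem h
  | fst _ ih => exact Deduce.fst ih
  | snd _ ih => exact Deduce.snd ih

lemma syn_deduce {S : Set Term} {t : Term} (h : Syn S t) : Deduce S t := by
  induction h with
  | acc h => exact acc_deduce h
  | pair _ _ ih₁ ih₂ => exact Deduce.pair ih₁ ih₂
  | mac hm hk => exact Deduce.mac hm hk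

lemma syn_fst {S : Set Term} {a b : Term} (h : Syn S (Term.pair a b)) : Syn S a := by
  cases h with
  | acc h => exact Syn.acc (Acc'.fst h)
  | pair h _ => exact h

lemma syn_snd {S : Set Term} {a b : Term} (h : Syn S (Term.pair a b)) : Syn S b := by
  cases h with
  | acc h => exact Syn.acc (Acc'.snd h)
  | pair _ h => exact h

lemma deduce_syn {S : Set Term} {t : Term} (h : Deduce S t) : Syn S t := by
  induction h with
  | mem h => exact Syn.acc (Acc'.mem h)
  | pair _ _ ih₁ ih₂ => exact Syn.pair ih₁ ih₂
  | fst _ ih => exact syn_fst ih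
  | snd _ ih => exact syn_snd ih
  | mac hm hk => exact Syn.mac hm hk

/-- Symbolic MAC unforgeability: `mac m k` is deducible from `S` iff it is
subterm-accessible from `S`, or both `m` and `k` are deducible from `S`. -/
theorem mac_characterization (S : Set Term) (m k : Term) :
    Deduce S (Term.mac m k) ↔
      Acc' S (Term.mac m k) ∨ (Deduce S m ∧ Deduce S k) := by
  constructor
  · intro h
    cases deduce_syn h with
    | acc h => exact Or.inl h
    | mac hm hk => exact Or.inr ⟨hm, hk⟩
  · rintro (h | ⟨hm, hk⟩)
    · exact acc_deduce h
    · exact Deduce.mac hm hk
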